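/- Let A : ℝ^n → ℝ^m be linear, 0 < τ ≤ 1/‖AᵀA‖, D : ℝ^n → ℝ^n nonexpansive, δ² > 1, and suppose T_δ = D_δ ∘ G has a fixed point, where D_δ = Id + (D − Id)/δ² and G(x) = x − τ·Aᵀ(Ax − y). Then for any x⁰, the PnP-PGD iterates x^{k+1} = T_δ(x^k) converge to a fixed point of T_δ. -/

import Mathlib

/-!
The gradient `x ↦ Aᵀ(Ax - y)` of `‖Ax - y‖² / 2` is `1/‖AᵀA‖`-cocoercive, so the gradient step
`G` is `1/2`-averaged; `D_δ = Id - (Id - D)/δ²` is a relaxation of the `1/2`-cocoercive map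
`Id - D` with step `1/δ² < 1`, hence averaged as well. Averagedness, in the quantitative form
`‖Tx - Tz‖² + c‖(x - Tx) - (z - Tz)‖² ≤ ‖x - z‖²` with `c > 0`, survives composition. For such a
`T` with a fixed point the iterates are Fejér monotone and `x_k - T x_k → 0`, so any cluster point
(balls in `ℝⁿ` are compact) is a fixed point, and Fejér monotonicity towards it upgrades
subsequential convergence to convergence of the whole sequence.
-/

open Filter Topology Function

open scoped InnerProductSpace

theorem LipschitzWith.antitone_dist_iterate {X : Type*} [PseudoMetricSpace X] {T : X → X}
    (hT : LipschitzWith 1 T) {q : X} (hq : IsFixedPt T q) (x : X) :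
    Antitone fun k => dist (T^[k] x) q :=
  antitone_nat_of_succ_le fun k => by
    simpa [iterate_succ_apply', hq.eq] using hT.dist_le_mul (T^[k] x) q

theorem tendsto_of_antitone_dist_of_tendsto_subseq {X : Type*} [PseudoMetricSpace X]
    {u : ℕ → X} {q : X} (hu : Antitone fun k => dist (u k) q) {φ : ℕ → ℕ} (hφ : StrictMono φ)
    (hq : Tendsto (u ∘ φ) atTop (𝓝 q)) : Tendsto u atTop (𝓝 q) := by
  have hlim : Tendsto (fun k => dist (u k) q) atTop (𝓝 (⨅ k, dist (u k) q)) :=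
    tendsto_atTop_ciInf hu ⟨0, by rintro _ ⟨k, rfl⟩; exact dist_nonneg⟩
  have hinf : (⨅ k, dist (u k) q) = 0 :=
    tendsto_nhds_unique (hlim.comp hφ.tendsto_atTop) (tendsto_iff_dist_tendsto_zero.1 hq)
  exact tendsto_iff_dist_tendsto_zero.2 (hinf ▸ hlim)

section Averaged

variable {E : Type*} [NormedAddCommGroup E]

/-- `T` is `α`-averaged, i.e. `T = (1 - α) • id + α • S` with `S` nonexpansive, iff this holds
with `c = (1 - α) / α`. -/
def IsAveraged (c : ℝ) (T : E → E) : Prop :=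
  ∀ x z, ‖T x - T z‖ ^ 2 + c * ‖(x - T x) - (z - T z)‖ ^ 2 ≤ ‖x - z‖ ^ 2

namespace IsAveraged

variable {c : ℝ} {T : E → E}

theorem lipschitzWith_one (hT : IsAveraged c T) (hc : 0 ≤ c) : LipschitzWith 1 T := by
  refine LipschitzWith.of_dist_le_mul fun x z => ?_
  rw [NNReal.coe_one, one_mul, dist_eq_norm, dist_eq_norm]
  have := hT x z
  exact pow_le_pow_iff_left₀ (norm_nonneg _) (norm_nonneg _) two_ne_zero |>.1 (by nlinarith)

theorem comp {c' : ℝ} {T' : E → E} (hT : IsAveraged c T) (hT' : IsAveraged c' T')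
    (hc : 0 ≤ c) (hc' : 0 ≤ c') : IsAveraged (min c c' / 2) (T' ∘ T) := by
  intro x z
  set a := (x - T x) - (z - T z)
  set b := (T x - T' (T x)) - (T z - T' (T z))
  have hab : (x - (T' ∘ T) x) - (z - (T' ∘ T) z) = a + b := by
    simp only [a, b, comp_apply]; abel
  have hsum : min c c' / 2 * ‖a + b‖ ^ 2 ≤ c * ‖a‖ ^ 2 + c' * ‖b‖ ^ 2 :=
    calc min c c' / 2 * ‖a + b‖ ^ 2 ≤ min c c' / 2 * (2 * (‖a‖ ^ 2 + ‖b‖ ^ 2)) := by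
          gcongr
          exact (pow_le_pow_left₀ (norm_nonneg _) (norm_add_le a b) 2).trans add_sq_le
      _ = min c c' * ‖a‖ ^ 2 + min c c' * ‖b‖ ^ 2 := by ring
      _ ≤ c * ‖a‖ ^ 2 + c' * ‖b‖ ^ 2 := by gcongr <;> simp
  rw [hab, comp_apply, comp_apply]
  linarith [hT x z, hT' (T x) (T z)]

theorem norm_sub_sq_add_le {q : E} (hT : IsAveraged c T) (hq : IsFixedPt T q) (x : E) :
    ‖T x - q‖ ^ 2 + c * ‖x - T x‖ ^ 2 ≤ ‖x - q‖ ^ 2 := by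
  simpa [hq.eq] using hT x q

theorem tendsto_iterate_sub_apply {q : E} (hT : IsAveraged c T) (hc : 0 < c)
    (hq : IsFixedPt T q) (x : E) :
    Tendsto (fun k => T^[k] x - T (T^[k] x)) atTop (𝓝 0) := by
  set a := fun k => dist (T^[k] x) q
  obtain ⟨L, hL⟩ : ∃ L, Tendsto a atTop (𝓝 L) :=
    ⟨_, tendsto_atTop_ciInf ((hT.lipschitzWith_one hc.le).antitone_dist_iterate hq x)
      ⟨0, by rintro _ ⟨k, rfl⟩; exact dist_nonneg⟩⟩
  have hdiff : Tendsto (fun k => (a k ^ 2 - a (k + 1) ^ 2) / c) atTop (𝓝 0) := by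
    simpa using ((hL.pow 2).sub ((hL.comp (tendsto_add_atTop_nat 1)).pow 2)).div_const c
  have hsq : Tendsto (fun k => ‖T^[k] x - T (T^[k] x)‖ ^ 2) atTop (𝓝 0) := by
    refine squeeze_zero (fun k => by positivity) (fun k => ?_) hdiff
    rw [le_div_iff₀ hc]
    have := hT.norm_sub_sq_add_le hq (T^[k] x)
    simp only [a, dist_eq_norm, iterate_succ_apply']
    linarith
  simpa [Real.sqrt_sq (norm_nonneg _)] using
    tendsto_zero_iff_norm_tendsto_zero.2 (by simpa using hsq.sqrt)

theorem tendsto_iterate [ProperSpace E] (hT : IsAveraged c T) (hc : 0 < c)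
    (hfix : ∃ q, IsFixedPt T q) (x : E) :
    ∃ p, IsFixedPt T p ∧ Tendsto (fun k => T^[k] x) atTop (𝓝 p) := by
  obtain ⟨q, hq⟩ := hfix
  have hT₁ := hT.lipschitzWith_one hc.le
  obtain ⟨p, -, φ, hφ, hp⟩ := (isCompact_closedBall q (dist x q)).tendsto_subseq fun k =>
    Metric.mem_closedBall.2 (hT₁.antitone_dist_iterate hq x (Nat.zero_le k))
  have hres := (hT.tendsto_iterate_sub_apply hc hq x).comp hφ.tendsto_atTop
  have hpfix : IsFixedPt T p :=
    (sub_eq_zero.1 (tendsto_nhds_unique (hp.sub ((hT₁.continuous.tendsto p).comp hp)) hres)).symm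
  exact ⟨p, hpfix, tendsto_of_antitone_dist_of_tendsto_subseq
    (hT₁.antitone_dist_iterate hpfix x) hφ hp⟩

end IsAveraged

end Averaged

section Cocoercive

variable {E : Type*} [NormedAddCommGroup E] [InnerProductSpace ℝ E]

def IsCocoercive (β : ℝ) (g : E → E) : Prop :=
  ∀ x z, β * ‖g x - g z‖ ^ 2 ≤ ⟪g x - g z, x - z⟫_ℝ

theorem IsCocoercive.isAveraged_sub_smul {β τ : ℝ} {g : E → E} (hg : IsCocoercive β g)
    (hτ : 0 < τ) : IsAveraged (2 * β / τ - 1) (fun x => x - τ • g x) := by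
  intro x z
  set u := x - z
  set v := g x - g z
  have hstep : (x - τ • g x) - (z - τ • g z) = u - τ • v := by simp only [u, v]; module
  have hres : (x - (x - τ • g x)) - (z - (z - τ • g z)) = τ • v := by simp only [v]; module
  rw [hstep, hres, norm_sub_sq_real, real_inner_smul_right, norm_smul, Real.norm_eq_abs,
    abs_of_pos hτ, real_inner_comm]
  have := mul_le_mul_of_nonneg_left (hg x z) hτ.le
  field_simp
  nlinarith

theorem LipschitzWith.isCocoercive_id_sub {S : E → E} (hS : LipschitzWith 1 S) :
    IsCocoercive (1 / 2) (fun x => x - S x) := by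
  intro x z
  have hv : ‖S x - S z‖ ≤ ‖x - z‖ := by simpa [dist_eq_norm] using hS.dist_le_mul x z
  set u := x - z
  set v := S x - S z
  have hw : (x - S x) - (z - S z) = u - v := by simp only [u, v]; abel
  clear_value u v
  rw [hw, norm_sub_sq_real, inner_sub_left, real_inner_self_eq_norm_sq, real_inner_comm]
  nlinarith [norm_nonneg v]

end Cocoercive

section LeastSquares

open ContinuousLinearMap

variable {E F : Type*} [NormedAddCommGroup E] [InnerProductSpace ℝ E] [CompleteSpace E]
  [NormedAddCommGroup F] [InnerProductSpace ℝ F] [CompleteSpace F]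

theorem isCocoercive_adjoint_apply_sub (A : E →L[ℝ] F) (y : F) {β : ℝ} (hβ : 0 ≤ β)
    (hβA : β * ‖(adjoint A).comp A‖ ≤ 1) : IsCocoercive β fun x => adjoint A (A x - y) := by
  intro x z
  have hlin : adjoint A (A x - y) - adjoint A (A z - y) = adjoint A (A (x - z)) := by
    simp only [map_sub]; abel
  rw [hlin, adjoint_inner_left, real_inner_self_eq_norm_sq]
  calc β * ‖adjoint A (A (x - z))‖ ^ 2 ≤ β * (‖A‖ * ‖A (x - z)‖) ^ 2 := by
        gcongr
        simpa using (adjoint A).le_opNorm (A (x - z))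
    _ = β * ‖(adjoint A).comp A‖ * ‖A (x - z)‖ ^ 2 := by
        rw [norm_adjoint_comp_self]; ring
    _ ≤ ‖A (x - z)‖ ^ 2 := mul_le_of_le_one_left (by positivity) hβA

end LeastSquares

/-- Convergence of the PnP-PGD iterations: with `0 < τ ≤ 1/‖AᵀA‖`, `D` nonexpansive,
`δ² > 1`, `D_δ = Id + (D − Id)/δ²`, `G(x) = x − τ·Aᵀ(Ax − y)` and `T_δ = D_δ ∘ G`
possessing a fixed point, the iterates `x^{k+1} = T_δ(x^k)` converge to a fixed
point of `T_δ` from any initialisation. -/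
theorem pnp_pgd_convergence
    (n m : ℕ) (A : EuclideanSpace ℝ (Fin n) →L[ℝ] EuclideanSpace ℝ (Fin m))
    (y : EuclideanSpace ℝ (Fin m)) (τ : ℝ)
    (hτ₀ : 0 < τ) (hτ : τ ≤ 1 / ‖(ContinuousLinearMap.adjoint A).comp A‖)
    (D : EuclideanSpace ℝ (Fin n) → EuclideanSpace ℝ (Fin n))
    (hD : LipschitzWith 1 D)
    (δ : ℝ) (hδ : 1 < δ ^ 2)
    (Dδ G Tδ : EuclideanSpace ℝ (Fin n) → EuclideanSpace ℝ (Fin n))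
    (hDδ : ∀ x, Dδ x = x + (δ ^ 2)⁻¹ • (D x - x))
    (hG : ∀ x, G x = x - τ • (ContinuousLinearMap.adjoint A) (A x - y))
    (hT : Tδ = Dδ ∘ G)
    (hfix : ∃ x, Tδ x = x)
    (x₀ : EuclideanSpace ℝ (Fin n)) :
    ∃ p, Tδ p = p ∧ Tendsto (fun k => Tδ^[k] x₀) atTop (𝓝 p) := by
  have hτA : τ * ‖(ContinuousLinearMap.adjoint A).comp A‖ ≤ 1 := by
    rcases (norm_nonneg ((ContinuousLinearMap.adjoint A).comp A)).eq_or_lt with h | h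
    · simp [← h]
    · exact (le_div_iff₀ h).1 hτ
  have hGavg : IsAveraged 1 G := by
    convert (isCocoercive_adjoint_apply_sub A y hτ₀.le hτA).isAveraged_sub_smul hτ₀ using 1
    · field_simp; norm_num
    · exact funext hG
  have hDδavg : IsAveraged (δ ^ 2 - 1) Dδ := by
    convert hD.isCocoercive_id_sub.isAveraged_sub_smul (inv_pos.2 (one_pos.trans hδ)) using 1
    · field_simp
    · exact funext fun x => by rw [hDδ]; module
  subst hT
  exact (hGavg.comp hDδavg zero_le_one (sub_pos.2 hδ).le).tendsto_iterate
    (half_pos (lt_min one_pos (sub_pos.2 hδ))) hfix x₀
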